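/- If R_AB = 𝒰⋆ρ is the 2-time PDM of a density matrix ρ evolving under a unitary channel 𝒰, then S(R_AB) = S(ρ), where S(X) = -Tr[X log|X|]. -/

import Mathlib

open Kronecker Matrix ComplexOrder

/-- Hermitian extension of the von Neumann entropy (base-2):
`S(X) = -Tr[X log₂|X|] = -∑ λᵢ log₂|λᵢ|` in terms of the eigenvalues of `X`. -/
noncomputable def hermEntropy {n : Type*} [Fintype n] [DecidableEq n]
    {X : Matrix n n ℂ} (hX : X.IsHermitian) : ℝ :=
  -∑ i, hX.eigenvalues i * Real.logb 2 |hX.eigenvalues i|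

/-- Jamiołkowski matrix `𝒥[𝒩] = ∑ᵢⱼ |i⟩⟨j| ⊗ 𝒩(|j⟩⟨i|)` of a map `𝒩`. -/
noncomputable def jam {n m : Type*} [Fintype n] [DecidableEq n]
    (𝒩 : Matrix n n ℂ → Matrix m m ℂ) : Matrix (n × m) (n × m) ℂ :=
  ∑ i : n, ∑ j : n, Matrix.single i j (1 : ℂ) ⊗ₖ 𝒩 (Matrix.single j i 1)

/-- The pseudo-density matrix (spatiotemporal product)
`𝒩 ⋆ ρ = (1/2){ρ ⊗ 𝟙, 𝒥[𝒩]}`. -/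
noncomputable def pdm {n m : Type*} [Fintype n] [DecidableEq n] [Fintype m] [DecidableEq m]
    (𝒩 : Matrix n n ℂ → Matrix m m ℂ) (ρ : Matrix n n ℂ) : Matrix (n × m) (n × m) ℂ :=
  (1 / 2 : ℂ) • ((ρ ⊗ₖ (1 : Matrix m m ℂ)) * jam 𝒩 + jam 𝒩 * (ρ ⊗ₖ (1 : Matrix m m ℂ)))

/-!
Write `ρ = Q Λ Q†` and `V = Q ⊗ UQ`. Then `V†(ρ ⊗ 𝟙)V = Λ ⊗ 𝟙` and `V† 𝒥[𝒰] V = S`, the swap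
operator, so `𝒰 ⋆ ρ` is unitarily equivalent to `S · diag((λᵢ + λⱼ)/2)`. This matrix acts on
`|ii⟩` as `λᵢ` and on `(|ij⟩ ± |ji⟩)/√2` (`i ≠ j`) as `±(λᵢ + λⱼ)/2`. Because `x ↦ -x log|x|`
is odd, the contributions of each pair `±(λᵢ + λⱼ)/2` cancel, leaving `-∑ λᵢ log|λᵢ| = S(ρ)`.
-/

section Spectrum

variable {n : Type*} [Fintype n] [DecidableEq n]

lemma Matrix.IsHermitian.map_eigenvalues_eq_of_eq_conj {A : Matrix n n ℂ} (hA : A.IsHermitian)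
    {W : Matrix n n ℂ} (hW : W ∈ unitaryGroup n ℂ) (d : n → ℝ)
    (hAW : A = W * diagonal (fun i => (d i : ℂ)) * star W) :
    Finset.univ.val.map hA.eigenvalues = Finset.univ.val.map d := by
  have hchar : A.charpoly = (diagonal fun i => (d i : ℂ)).charpoly := by
    rw [hAW, charpoly_mul_comm, ← Matrix.mul_assoc, mem_unitaryGroup_iff'.1 hW, Matrix.one_mul]
  have hroots := congrArg Polynomial.roots hchar
  rw [hA.roots_charpoly_eq_eigenvalues, charpoly_diagonal, Polynomial.roots_prod _ _ (by
    simp [Finset.prod_ne_zero_iff, Polynomial.X_sub_C_ne_zero])] at hroots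
  refine Multiset.map_injective Complex.ofReal_injective ?_
  simpa [Multiset.map_map, Function.comp_def] using hroots

lemma Matrix.IsHermitian.sum_comp_eigenvalues_eq_of_eq_conj {A : Matrix n n ℂ}
    (hA : A.IsHermitian) {W : Matrix n n ℂ} (hW : W ∈ unitaryGroup n ℂ) (d : n → ℝ)
    (hAW : A = W * diagonal (fun i => (d i : ℂ)) * star W) (f : ℝ → ℝ) :
    ∑ i, f (hA.eigenvalues i) = ∑ i, f (d i) := by
  have h := congrArg (fun s => (s.map f).sum) (hA.map_eigenvalues_eq_of_eq_conj hW d hAW)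
  simp only [Multiset.map_map] at h
  exact h

end Spectrum

section SwapMatrix

variable {α : Type*} [Fintype α] [DecidableEq α]

variable (α) in
def swapMatrix : Matrix (α × α) (α × α) ℂ := (Equiv.prodComm α α).toPEquiv.toMatrix

lemma swapMatrix_mul {n : Type*} (A : Matrix (α × α) n ℂ) :
    swapMatrix α * A = A.submatrix Prod.swap id :=
  PEquiv.toMatrix_toPEquiv_mul _ A

lemma mul_swapMatrix {m : Type*} (A : Matrix m (α × α) ℂ) :
    A * swapMatrix α = A.submatrix id Prod.swap :=
  PEquiv.mul_toMatrix_toPEquiv A _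

lemma swapMatrix_mul_kronecker (A B : Matrix α α ℂ) :
    swapMatrix α * (A ⊗ₖ B) = (B ⊗ₖ A) * swapMatrix α := by
  ext p q
  rw [swapMatrix_mul, mul_swapMatrix]
  simp [mul_comm]

lemma diagonal_mul_swapMatrix (x : α × α → ℂ) :
    diagonal x * swapMatrix α = swapMatrix α * diagonal (x ∘ Prod.swap) := by
  ext p q
  rw [swapMatrix_mul, mul_swapMatrix]
  simp only [submatrix_apply, diagonal_apply]
  grind

lemma diagonal_add_swapMatrix_mul_diagonal_mem_unitaryGroup (a b : α × α → ℝ)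
    (hnorm : ∀ p, a p ^ 2 + b p ^ 2 = 1) (horth : ∀ p, a p.swap * b p + b p.swap * a p = 0) :
    diagonal (fun p => (a p : ℂ)) + swapMatrix α * diagonal (fun p => (b p : ℂ)) ∈
      unitaryGroup (α × α) ℂ := by
  rw [mem_unitaryGroup_iff', star_eq_conjTranspose]
  ext p q
  simp [mul_apply, swapMatrix_mul, diagonal_apply, Prod.swap_eq_iff_eq_swap, add_mul, mul_add,
    Finset.sum_add_distrib, ite_mul, mul_ite, one_apply]
  have hnorm' (p) : (a p : ℂ) ^ 2 + b p ^ 2 = 1 := mod_cast hnorm p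
  have horth' (p) : (a p.swap : ℂ) * b p + b p.swap * a p = 0 := mod_cast horth p
  split_ifs <;> subst_vars <;> grind

lemma jam_conj (U : Matrix α α ℂ) :
    jam (fun X => U * X * Uᴴ) = (Uᴴ ⊗ₖ U) * swapMatrix α := by
  ext p q
  rw [mul_swapMatrix]
  simp [jam, Matrix.sum_apply, mul_apply, Matrix.single_apply, ite_and, mul_comm]

lemma pdm_unitary_conj_eq {U Q : Matrix α α ℂ} (hU : U ∈ unitaryGroup α ℂ)
    (hQ : Q ∈ unitaryGroup α ℂ) (lam : α → ℝ) :
    pdm (fun X => U * X * Uᴴ) (Q * diagonal (fun i => (lam i : ℂ)) * Qᴴ) =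
      (Q ⊗ₖ (U * Q)) * (swapMatrix α * diagonal (fun p => (((lam p.1 + lam p.2) / 2 : ℝ) : ℂ))) *
        (Q ⊗ₖ (U * Q))ᴴ := by
  have hQ' : Q * Qᴴ = 1 := mem_unitaryGroup_iff.1 hQ
  have hUQ : U * Q * (U * Q)ᴴ = 1 := mem_unitaryGroup_iff.1 (mul_mem hU hQ)
  set V := Q ⊗ₖ (U * Q) with hVdef
  have hV : Vᴴ * V = 1 := mem_unitaryGroup_iff'.1 (kronecker_mem_unitary hQ (mul_mem hU hQ))
  have hconj (A B : Matrix (α × α) (α × α) ℂ) :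
      V * A * Vᴴ * (V * B * Vᴴ) = V * (A * B) * Vᴴ := by
    rw [show V * A * Vᴴ * (V * B * Vᴴ) = V * A * (Vᴴ * V) * B * Vᴴ by
      simp only [Matrix.mul_assoc], hV, Matrix.mul_one, Matrix.mul_assoc V A B]
  have hρ : (Q * diagonal (fun i => (lam i : ℂ)) * Qᴴ) ⊗ₖ (1 : Matrix α α ℂ) =
      V * diagonal (fun p => (lam p.1 : ℂ)) * Vᴴ := by
    have hD : diagonal (fun p : α × α => (lam p.1 : ℂ)) =
        diagonal (fun i => (lam i : ℂ)) ⊗ₖ 1 := by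
      rw [← diagonal_one, diagonal_kronecker_diagonal]
      simp
    rw [hD, hVdef, conjTranspose_kronecker, ← mul_kronecker_mul, ← mul_kronecker_mul,
      Matrix.mul_one, hUQ]
  have hJ : jam (fun X => U * X * Uᴴ) = V * swapMatrix α * Vᴴ := by
    rw [jam_conj, hVdef, conjTranspose_kronecker, Matrix.mul_assoc, swapMatrix_mul_kronecker,
      ← Matrix.mul_assoc, ← mul_kronecker_mul, conjTranspose_mul, ← Matrix.mul_assoc, hQ',
      Matrix.one_mul, Matrix.mul_assoc, hQ', Matrix.mul_one]
  have hmid : (1 / 2 : ℂ) • (diagonal (fun p => (lam p.1 : ℂ)) * swapMatrix α +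
      swapMatrix α * diagonal (fun p => (lam p.1 : ℂ))) =
        swapMatrix α * diagonal (fun p => (((lam p.1 + lam p.2) / 2 : ℝ) : ℂ)) := by
    rw [diagonal_mul_swapMatrix, ← Matrix.mul_add, ← Matrix.mul_smul, diagonal_add,
      ← diagonal_smul]
    congr 2
    ext p
    simp
    ring
  rw [pdm, hρ, hJ, hconj, hconj, ← Matrix.add_mul, ← Matrix.mul_add, ← hmid, Matrix.mul_smul,
    Matrix.smul_mul]

end SwapMatrix

section SwapEigenbasis

variable {α : Type*} [LinearOrder α]

def swapSign (p : α × α) : ℝ := if p.2 < p.1 then -1 else 1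

lemma swapSign_swap {p : α × α} (hp : p.1 ≠ p.2) : swapSign p.swap = -swapSign p := by
  rcases hp.lt_or_gt with h | h <;> simp [swapSign, h, h.not_gt]

lemma swapSign_sq (p : α × α) : swapSign p ^ 2 = 1 := by
  unfold swapSign; split_ifs <;> norm_num

lemma swapSign_of_eq {p : α × α} (hp : p.1 = p.2) : swapSign p = 1 := by
  simp [swapSign, hp]

variable [Fintype α]

/-- Column `(i, i)` is `|ii⟩`; column `(i, j)` with `i ≠ j` is `(|ij⟩ + swapSign (i, j) |ji⟩)/√2`. -/
noncomputable def swapEigenbasis : Matrix (α × α) (α × α) ℂ :=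
  diagonal (fun p => ((if p.1 = p.2 then 1 else (√2)⁻¹ : ℝ) : ℂ)) +
    swapMatrix α * diagonal (fun p => ((if p.1 = p.2 then 0 else swapSign p * (√2)⁻¹ : ℝ) : ℂ))

lemma swapEigenbasis_mem_unitaryGroup :
    (swapEigenbasis : Matrix (α × α) (α × α) ℂ) ∈ unitaryGroup (α × α) ℂ := by
  have hsqrt : (√2)⁻¹ ^ 2 = (1 / 2 : ℝ) := by
    rw [inv_pow, Real.sq_sqrt zero_le_two]; norm_num
  apply diagonal_add_swapMatrix_mul_diagonal_mem_unitaryGroup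
  · intro p
    split_ifs
    · norm_num
    · rw [mul_pow, swapSign_sq, hsqrt]; norm_num
  · intro p
    by_cases hp : p.1 = p.2
    · simp [hp]
    · simp [hp, Ne.symm hp, swapSign_swap hp]
      ring

lemma swapMatrix_mul_diagonal_mul_swapEigenbasis (c : α × α → ℝ) (hc : ∀ p, c p.swap = c p) :
    swapMatrix α * diagonal (fun p => (c p : ℂ)) * swapEigenbasis =
      swapEigenbasis * diagonal (fun p => ((swapSign p * c p : ℝ) : ℂ)) := by
  ext p q
  rw [Matrix.mul_assoc, swapMatrix_mul]
  simp [swapEigenbasis, Matrix.mul_add, swapMatrix_mul, diagonal_mul, mul_diagonal,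
    diagonal_apply, Prod.swap_eq_iff_eq_swap, hc]
  have hsign (q : α × α) : (swapSign q : ℂ) ^ 2 = 1 := mod_cast swapSign_sq q
  rcases eq_or_ne p q with rfl | hpq
  · by_cases hd : p.1 = p.2
    · have hp : p = p.swap := Prod.ext hd hd.symm
      simp [← hp, hd, swapSign_of_eq hd]
    · have hp : p ≠ p.swap := fun h => hd (congrArg Prod.fst h)
      simp [hp, hd]
      ring
  · by_cases hs : p = q.swap
    · subst hs
      have hd : q.1 ≠ q.2 := fun h => hpq (Prod.ext h.symm h)
      simp [hd, hpq, hc]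
      linear_combination (-(c q : ℂ) * (√2 : ℂ)⁻¹) * hsign q
    · simp [hpq, hs]

lemma swapMatrix_mul_diagonal_eq_conj (c : α × α → ℝ) (hc : ∀ p, c p.swap = c p) :
    swapMatrix α * diagonal (fun p => (c p : ℂ)) =
      swapEigenbasis * diagonal (fun p => ((swapSign p * c p : ℝ) : ℂ)) * star swapEigenbasis := by
  rw [← swapMatrix_mul_diagonal_mul_swapEigenbasis c hc, Matrix.mul_assoc _ swapEigenbasis,
    mem_unitaryGroup_iff.1 swapEigenbasis_mem_unitaryGroup, Matrix.mul_one]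

lemma sum_swapSign_mul_of_odd {f : ℝ → ℝ} (hf : f.Odd) (c : α × α → ℝ)
    (hc : ∀ p, c p.swap = c p) :
    ∑ p, f (swapSign p * c p) = ∑ i, f (c (i, i)) := by
  have hpair (p : α × α) : f (swapSign p * c p) + f (swapSign p.swap * c p.swap) =
      if p.1 = p.2 then 2 * f (c p) else 0 := by
    by_cases hp : p.1 = p.2
    · have hfix : p.swap = p := Prod.ext hp.symm hp
      simp [hp, hfix, swapSign_of_eq hp, two_mul]
    · simp [hp, swapSign_swap hp, hc, hf _]
  have hswap : ∑ p : α × α, f (swapSign p.swap * c p.swap) = ∑ p, f (swapSign p * c p) :=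
    Fintype.sum_equiv (Equiv.prodComm α α) _ _ fun _ => rfl
  have hsum : ∑ p, f (swapSign p * c p) + ∑ p : α × α, f (swapSign p.swap * c p.swap) =
      2 * ∑ i, f (c (i, i)) := by
    rw [← Finset.sum_add_distrib, Finset.sum_congr rfl fun p _ => hpair p, Fintype.sum_prod_type]
    simp [Finset.mul_sum]
  linarith

end SwapEigenbasis

theorem hermEntropy_pdm_unitary_general {N : ℕ} (ρ U : Matrix (Fin N) (Fin N) ℂ)
    (hρ : ρ.IsHermitian) (hU : U * Uᴴ = 1)
    (hR : (pdm (fun X => U * X * Uᴴ) ρ).IsHermitian) :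
    hermEntropy hR = hermEntropy hρ := by
  set Q : Matrix (Fin N) (Fin N) ℂ := (hρ.eigenvectorUnitary : Matrix (Fin N) (Fin N) ℂ)
  set lam := hρ.eigenvalues
  set c : Fin N × Fin N → ℝ := fun p => (lam p.1 + lam p.2) / 2
  have hc (p : Fin N × Fin N) : c p.swap = c p := by
    simp only [c, Prod.fst_swap, Prod.snd_swap, add_comm]
  have hρQ : ρ = Q * diagonal (fun i => (lam i : ℂ)) * Qᴴ := hρ.spectral_theorem
  have hQ : Q ∈ unitaryGroup (Fin N) ℂ := hρ.eigenvectorUnitary.2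
  have hUunit : U ∈ unitaryGroup (Fin N) ℂ := mem_unitaryGroup_iff.2 hU
  have hV : Q ⊗ₖ (U * Q) ∈ unitaryGroup (Fin N × Fin N) ℂ :=
    kronecker_mem_unitary hQ (mul_mem hUunit hQ)
  have hRdiag : pdm (fun X => U * X * Uᴴ) ρ = (Q ⊗ₖ (U * Q) * swapEigenbasis) *
      diagonal (fun p => ((swapSign p * c p : ℝ) : ℂ)) * star (Q ⊗ₖ (U * Q) * swapEigenbasis) := by
    rw [hρQ, pdm_unitary_conj_eq hUunit hQ, swapMatrix_mul_diagonal_eq_conj c hc, star_mul]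
    simp only [Matrix.mul_assoc]
    rfl
  rw [hermEntropy, hermEntropy, hR.sum_comp_eigenvalues_eq_of_eq_conj
    (mul_mem hV swapEigenbasis_mem_unitaryGroup) _ hRdiag (fun x => x * Real.logb 2 |x|),
    sum_swapSign_mul_of_odd (f := fun x => x * Real.logb 2 |x|) (fun x => by simp [abs_neg]) c hc]
  simp only [c, lam, add_self_div_two]

/-- For a density matrix `ρ` evolving under a unitary channel,
`S(𝒰 ⋆ ρ) = S(ρ)`. -/
theorem hermEntropy_pdm_unitary {N : ℕ} (ρ U : Matrix (Fin N) (Fin N) ℂ)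
    (hρ : ρ.IsHermitian) (hρpos : ρ.PosSemidef) (hρtr : ρ.trace = 1)
    (hU : U * Uᴴ = 1) (hU' : Uᴴ * U = 1)
    (hR : (pdm (fun X => U * X * Uᴴ) ρ).IsHermitian) :
    hermEntropy hR = hermEntropy hρ :=
  hermEntropy_pdm_unitary_general ρ U hρ hU hR
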